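/- Let G be a digraph and x a non-terminating chip-distribution on G. Then there exists a recurrent chip-distribution y with x ⤳ y; in particular, x ~ y. -/

import Mathlib

namespace ChipFiring

variable {V : Type*}

/-- Out-degree of a vertex: total multiplicity of edges leaving `v`. -/
def outdeg [Fintype V] (d : V → V → ℕ) (v : V) : ℕ := ∑ u, d v u

/-- In-degree of a vertex: total multiplicity of edges entering `v`. -/
def indeg [Fintype V] (d : V → V → ℕ) (v : V) : ℕ := ∑ u, d u v

/-- A digraph (multiplicity function) has no loops. -/
def Loopless (d : V → V → ℕ) : Prop := ∀ v, d v v = 0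

/-- Weak connectivity: each pair of vertices is joined by an undirected walk. -/
def WeaklyConnected (d : V → V → ℕ) : Prop :=
  ∀ u v : V, Relation.ReflTransGen (fun a b => d a b ≠ 0 ∨ d b a ≠ 0) u v

/-- Strong connectivity: each ordered pair of vertices is joined by a directed walk. -/
def StronglyConnected (d : V → V → ℕ) : Prop :=
  ∀ u v : V, Relation.ReflTransGen (fun a b => d a b ≠ 0) u v

/-- Eulerian: out-degree equals in-degree at each vertex. -/
def Eulerian [Fintype V] (d : V → V → ℕ) : Prop := ∀ v, outdeg d v = indeg d v

/-- The Laplacian matrix: `L(u,u) = -d⁺(u)`, and `L(u,v) = d(v,u)` for `u ≠ v`. -/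
def laplacian [Fintype V] [DecidableEq V] (d : V → V → ℕ) : Matrix V V ℤ :=
  fun u v => if u = v then -(outdeg d v : ℤ) else (d v u : ℤ)

/-- Firing vertex `v`: `v` sends one chip along each outgoing edge. -/
def fire [Fintype V] [DecidableEq V] (d : V → V → ℕ) (x : V → ℕ) (v : V) : V → ℕ :=
  fun u => if u = v then x v - outdeg d v else x u + d v u

/-- `LegalSeq d x α` : the sequence of firings `α` is legal from initial distribution `x`. -/
def LegalSeq [Fintype V] [DecidableEq V] (d : V → V → ℕ) : (V → ℕ) → List V → Prop
  | _, [] => True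
  | x, v :: rest => outdeg d v ≤ x v ∧ LegalSeq d (fire d x v) rest

/-- The chip-distribution obtained from `x` after performing the firings `α`. -/
def runGame [Fintype V] [DecidableEq V] (d : V → V → ℕ) : (V → ℕ) → List V → (V → ℕ)
  | x, [] => x
  | x, v :: rest => runGame d (fire d x v) rest

/-- The firing vector of a game: how many times each vertex is fired. -/
def firingVector [DecidableEq V] (α : List V) : V → ℕ := fun v => α.count v

/-- `x ⤳ y` : some legal game transforms `x` into `y`. -/
def Reaches [Fintype V] [DecidableEq V] (d : V → V → ℕ) (x y : V → ℕ) : Prop :=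
  ∃ α : List V, LegalSeq d x α ∧ runGame d x α = y

/-- A period vector: a nonnegative integer vector in the kernel of the Laplacian. -/
def PeriodVector [Fintype V] [DecidableEq V] (d : V → V → ℕ) (p : V → ℕ) : Prop :=
  (laplacian d).mulVec (fun v => (p v : ℤ)) = 0

/-- A vector `f ∈ ℕ^V` is reduced if `f ≥ p` fails for every nonzero period vector `p`. -/
def Reduced [Fintype V] [DecidableEq V] (d : V → V → ℕ) (f : V → ℕ) : Prop :=
  ∀ p : V → ℕ, PeriodVector d p → p ≠ 0 → ¬ (∀ v, p v ≤ f v)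

/-- A distribution is recurrent if a nonempty legal game transforms it back to itself. -/
def Recurrent [Fintype V] [DecidableEq V] (d : V → V → ℕ) (x : V → ℕ) : Prop :=
  ∃ α : List V, α ≠ [] ∧ LegalSeq d x α ∧ runGame d x α = x

/-- Linear equivalence: `x = y + Lz` for some integer vector `z`. -/
def LinEquiv [Fintype V] [DecidableEq V] (d : V → V → ℕ) (x y : V → ℕ) : Prop :=
  ∃ z : V → ℤ, ∀ v, (x v : ℤ) = (y v : ℤ) + (laplacian d).mulVec z v

/-- `x` is non-terminating: there is an infinite sequence of legal firings from `x`. -/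
def NonTerminating [Fintype V] [DecidableEq V] (d : V → V → ℕ) (x : V → ℕ) : Prop :=
  ∃ s : ℕ → V, ∀ n : ℕ, LegalSeq d x (List.ofFn (fun i : Fin n => s i))

end ChipFiring

/-! Firing never increases the number of chips, so the states along an infinite legal game all
lie in the finite set of distributions bounded by `∑ v, x v`. Some state therefore repeats, and
the game between its two visits is a nonempty legal cycle. -/

namespace ChipFiring

section Games

variable {V : Type*} [DecidableEq V]

lemma natCast_firingVector_cons (a : V) (α : List V) :
    (fun u => (firingVector (a :: α) u : ℤ)) = Pi.single a 1 + fun u => (firingVector α u : ℤ) := by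
  funext u
  by_cases hu : u = a
  · subst hu
    simp [firingVector, add_comm]
  · simp [firingVector, hu, Ne.symm hu]

variable [Fintype V] (d : V → V → ℕ)

lemma runGame_append (x : V → ℕ) (α β : List V) :
    runGame d x (α ++ β) = runGame d (runGame d x α) β := by
  induction α generalizing x with
  | nil => rfl
  | cons a α ih => exact ih (fire d x a)

lemma legalSeq_append {x : V → ℕ} {α β : List V} :
    LegalSeq d x (α ++ β) ↔ LegalSeq d x α ∧ LegalSeq d (runGame d x α) β := by
  induction α generalizing x with
  | nil => simp [LegalSeq, runGame]
  | cons a α ih => simp only [List.cons_append, LegalSeq, runGame, ih, and_assoc]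

/-- The `d v v` chips sent along loops at `v` are lost: `fire` does not put them back on `v`. -/
lemma sum_fire_le {x : V → ℕ} {v : V} (h : outdeg d v ≤ x v) :
    ∑ u, fire d x v u ≤ ∑ u, x u := by
  have hoff : ∑ u ∈ {v}ᶜ, fire d x v u = ∑ u ∈ {v}ᶜ, x u + ∑ u ∈ {v}ᶜ, d v u := by
    rw [← Finset.sum_add_distrib]
    refine Finset.sum_congr rfl fun u hu => ?_
    have huv : u ≠ v := by simpa using hu
    simp [fire, huv]
  have hout : outdeg d v = d v v + ∑ u ∈ {v}ᶜ, d v u := Fintype.sum_eq_add_sum_compl v _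
  have hv : fire d x v v = x v - outdeg d v := if_pos rfl
  rw [Fintype.sum_eq_add_sum_compl v, Fintype.sum_eq_add_sum_compl v x, hoff, hv]
  omega

lemma sum_runGame_le {x : V → ℕ} {α : List V} (h : LegalSeq d x α) :
    ∑ u, runGame d x α u ≤ ∑ u, x u := by
  induction α generalizing x with
  | nil => exact le_rfl
  | cons a α ih => exact (ih h.2).trans (sum_fire_le d h.1)

lemma natCast_fire {x : V → ℕ} {v : V} (h : outdeg d v ≤ x v) (u : V) :
    (fire d x v u : ℤ) = x u + laplacian d u v := by
  by_cases hu : u = v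
  · subst hu
    simp [fire, laplacian, Nat.cast_sub h, sub_eq_add_neg]
  · simp [fire, laplacian, hu]

lemma natCast_runGame {x : V → ℕ} {α : List V} (h : LegalSeq d x α) (u : V) :
    (runGame d x α u : ℤ) = x u + (laplacian d).mulVec (fun w => (firingVector α w : ℤ)) u := by
  induction α generalizing x with
  | nil => simp [runGame, firingVector, ← Pi.zero_def]
  | cons a α ih =>
    rw [runGame, ih h.2, natCast_fire d h.1, natCast_firingVector_cons, Matrix.mulVec_add,
      Matrix.mulVec_single_one]
    simp only [Pi.add_apply, Matrix.col_apply]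
    ring

lemma linEquiv_runGame {x : V → ℕ} {α : List V} (h : LegalSeq d x α) :
    LinEquiv d x (runGame d x α) := by
  refine ⟨-fun w => (firingVector α w : ℤ), fun u => ?_⟩
  rw [Matrix.mulVec_neg, Pi.neg_apply, natCast_runGame d h]
  ring

lemma recurrent_runGame_of_runGame_append_eq {x : V → ℕ} {α β : List V}
    (hlegal : LegalSeq d x (α ++ β)) (hβ : β ≠ [])
    (heq : runGame d x (α ++ β) = runGame d x α) :
    Recurrent d (runGame d x α) :=
  ⟨β, hβ, ((legalSeq_append d).mp hlegal).2, by rwa [← runGame_append]⟩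

end Games

lemma exists_ofFn_eq_append_of_lt {α : Type*} (s : ℕ → α) {m n : ℕ} (h : m < n) :
    ∃ β ≠ [], (List.ofFn fun i : Fin n => s i) = (List.ofFn fun i : Fin m => s i) ++ β := by
  obtain ⟨k, rfl⟩ := Nat.exists_eq_add_of_lt h
  refine ⟨List.ofFn fun j : Fin (k + 1) => s (m + j), by simp, ?_⟩
  change List.ofFn (fun i : Fin (m + (k + 1)) => s i) = _
  rw [List.ofFn_add]
  rfl

theorem exists_recurrent_of_nonTerminating_general {V : Type*} [Fintype V] [DecidableEq V]
    (d : V → V → ℕ) (x : V → ℕ) (hnt : NonTerminating d x) :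
    ∃ y : V → ℕ, Recurrent d y ∧ Reaches d x y ∧ LinEquiv d x y := by
  obtain ⟨s, hs⟩ := hnt
  set game : ℕ → List V := fun n => List.ofFn fun i : Fin n => s i
  have hbounded : ∀ n, runGame d x (game n) ∈ Set.Iic fun _ => ∑ v, x v := fun n v =>
    (Finset.single_le_sum (fun _ _ => Nat.zero_le _) (Finset.mem_univ v)).trans
      (sum_runGame_le d (hs n))
  obtain ⟨m, n, hmn, hrepeat⟩ := Set.Finite.exists_lt_map_eq_of_forall_mem hbounded
    (Set.finite_Iic _)
  obtain ⟨β, hβ, hsplit⟩ := exists_ofFn_eq_append_of_lt s hmn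
  have hlegal : LegalSeq d x (game m ++ β) := hsplit ▸ hs n
  refine ⟨runGame d x (game m), ?_, ⟨game m, hs m, rfl⟩, linEquiv_runGame d (hs m)⟩
  exact recurrent_runGame_of_runGame_append_eq d hlegal hβ (hsplit ▸ hrepeat.symm)

/-- If `x` is non-terminating then some recurrent distribution `y` is
reachable from `x`; in particular `x ~ y`. -/
theorem exists_recurrent_of_nonTerminating {V : Type*} [Fintype V] [DecidableEq V]
    (d : V → V → ℕ) (hloop : Loopless d) (hconn : WeaklyConnected d)
    (x : V → ℕ) (hnt : NonTerminating d x) :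
    ∃ y : V → ℕ, Recurrent d y ∧ Reaches d x y ∧ LinEquiv d x y :=
  exists_recurrent_of_nonTerminating_general d x hnt

end ChipFiring
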